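/- arXiv:2405.19172 — 5 statements merged into one kernel-verified Lean document; each statement's English description precedes it below -/
import Mathlib

section
/- For a simple graph G on n ≥ 2 vertices and integer t ≥ 1, the generalized Sierpiński graph S(G,t) has exactly n^t vertices and |E(G)| · (n^t − 1)/(n − 1) edges. -/
variable {V : Type*}

/-- Adjacency of the generalized Sierpiński graph `S(G,t)` on words of length `t`:
`u` and `v` are adjacent iff there is an index `i` with `u j = v j` for `j < i`,
`u i` adjacent to `v i` in `G`, and `u j = v i`, `v j = u i` for `j > i`. -/
def sierAdj (G : SimpleGraph V) (t : ℕ) (u v : Fin t → V) : Prop :=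
  ∃ i : Fin t, (∀ j, j < i → u j = v j) ∧ G.Adj (u i) (v i) ∧
    ∀ j, i < j → u j = v i ∧ v j = u i

/-- The generalized Sierpiński graph `S(G,t)`. -/
def sier (G : SimpleGraph V) (t : ℕ) : SimpleGraph (Fin t → V) where
  Adj := sierAdj G t
  symm := by
    constructor
    rintro u v ⟨i, h1, h2, h3⟩
    exact ⟨i, fun j hj => (h1 j hj).symm, h2.symm,
      fun j hj => ⟨(h3 j hj).2, (h3 j hj).1⟩⟩
  loopless := by
    constructor
    rintro u ⟨i, h1, h2, h3⟩
    exact G.loopless.irrefl _ h2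

/-- `linkingAt G t p u v` : `uv` is a linking edge of `S(G,t)` appearing at
(0-indexed) position `p < t - 1`; in the paper's terminology this linking edge is
produced at step `t - p`, and its contraction is a vertex contracted at step `t - p`. -/
def linkingAt (G : SimpleGraph V) (t p : ℕ) (u v : Fin t → V) : Prop :=
  ∃ i : Fin t, i.val = p ∧ i.val + 1 < t ∧ (∀ j, j < i → u j = v j) ∧
    G.Adj (u i) (v i) ∧ ∀ j, i < j → u j = v i ∧ v j = u i

/-- `uv` is a linking edge of `S(G,t)` (an edge appearing at some step `≥ 2`). -/
def linking (G : SimpleGraph V) (t : ℕ) (u v : Fin t → V) : Prop :=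
  ∃ p, linkingAt G t p u v

/-- The equivalence relation on words generated by identifying the two endpoints
of each linking edge. -/
def gasketSetoid (G : SimpleGraph V) (t : ℕ) : Setoid (Fin t → V) :=
  Relation.EqvGen.setoid (linking G t)

/-- The generalized Sierpiński gasket graph `S[G,t]`, obtained from `S(G,t)` by
contracting all linking edges. -/
def gasket (G : SimpleGraph V) (t : ℕ) :
    SimpleGraph (Quotient (gasketSetoid G t)) where
  Adj x y := x ≠ y ∧ ∃ u v, Quotient.mk (gasketSetoid G t) u = x ∧
    Quotient.mk (gasketSetoid G t) v = y ∧ sierAdj G t u v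
  symm := by
    constructor
    rintro x y ⟨hxy, u, v, hu, hv, h⟩
    exact ⟨hxy.symm, v, u, hv, hu, (sier G t).adj_symm h⟩
  loopless := ⟨fun _ h => h.1 rfl⟩

/-- The expanded word `i j j ... j`; for `ij ∈ E(G)` its class in `S[G,t]` is the
contracted vertex `{i,j}_t`. -/
def topWord (t : ℕ) (i j : V) : Fin t → V := fun k => if k.val = 0 then i else j

/-! A dart `(u, v)` of `S(G,t)` is determined by the position `i` of its witness (the first
index where `u` and `v` differ), the common prefix `u₀ … u_{i-1}` and the dart `(u i, v i)`
of `G`, and every such triple occurs. Hence `S(G,t)` has `∑_{i<t} nⁱ` times as many darts,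
and so edges, as `G`, and the geometric sum is `(nᵗ - 1)/(n - 1)`. -/

theorem SimpleGraph.natCard_dart_eq_twice_natCard_edgeSet [Finite V] (G : SimpleGraph V) :
    Nat.card G.Dart = 2 * Nat.card G.edgeSet := by
  classical
  have := Fintype.ofFinite V
  rw [Nat.card_eq_fintype_card, G.dart_card_eq_twice_card_edges, Nat.card_eq_fintype_card,
    SimpleGraph.card_edgeSet]

def spliceWord {t : ℕ} (i : Fin t) (w : Fin i → V) (a b : V) : Fin t → V :=
  fun k => if h : k.val < i.val then w ⟨k.val, h⟩ else if k = i then a else b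

section spliceWord

variable {t : ℕ} {i k : Fin t} {w : Fin i → V} {a b : V}

@[simp]
theorem spliceWord_of_lt (hk : k < i) : spliceWord i w a b k = w ⟨k, hk⟩ :=
  dif_pos hk

@[simp]
theorem spliceWord_castLE (j : Fin i) : spliceWord i w a b (Fin.castLE i.2.le j) = w j :=
  spliceWord_of_lt j.2

@[simp]
theorem spliceWord_self : spliceWord i w a b i = a := by
  simp [spliceWord]

@[simp]
theorem spliceWord_of_gt (hk : i < k) : spliceWord i w a b k = b := by
  simp [spliceWord, hk.ne', not_lt.mpr hk.le]

end spliceWord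

theorem sierAdj_index_unique {G : SimpleGraph V} {t : ℕ} {u v : Fin t → V} {i i' : Fin t}
    (h : ∀ j < i, u j = v j) (hi : G.Adj (u i) (v i))
    (h' : ∀ j < i', u j = v j) (hi' : G.Adj (u i') (v i')) : i = i' := by
  rcases lt_trichotomy i i' with hlt | heq | hgt
  · exact absurd (h' i hlt) hi.ne
  · exact heq
  · exact absurd (h i' hgt) hi'.ne

theorem sierAdj_spliceWord {G : SimpleGraph V} {t : ℕ} (i : Fin t) (w : Fin i → V)
    {a b : V} (hab : G.Adj a b) : sierAdj G t (spliceWord i w a b) (spliceWord i w b a) :=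
  ⟨i, fun j hj => by simp [hj], by simpa using hab, fun j hj => by simp [hj]⟩

theorem eq_spliceWord {t : ℕ} {u : Fin t → V} {i : Fin t} {w : Fin i → V} {b : V}
    (hw : ∀ j, u (Fin.castLE i.2.le j) = w j) (hb : ∀ j, i < j → u j = b) :
    u = spliceWord i w (u i) b := by
  funext k
  rcases lt_trichotomy k i with hk | rfl | hk
  · simpa [hk] using hw ⟨k, hk⟩
  · simp
  · simpa [hk] using hb k hk

def sierDartOfSigma (G : SimpleGraph V) (t : ℕ) :
    (Σ i : Fin t, (Fin i → V) × G.Dart) → (sier G t).Dart :=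
  fun ⟨i, w, d⟩ => ⟨(spliceWord i w d.fst d.snd, spliceWord i w d.snd d.fst),
    sierAdj_spliceWord i w d.adj⟩

theorem sierDartOfSigma_injective (G : SimpleGraph V) (t : ℕ) :
    Function.Injective (sierDartOfSigma G t) := by
  rintro ⟨i, w, d⟩ ⟨i', w', d'⟩ h
  have hu := congrArg (fun e => e.toProd.1) h
  have hv := congrArg (fun e => e.toProd.2) h
  simp only [sierDartOfSigma] at hu hv
  obtain rfl : i = i' := by
    refine sierAdj_index_unique (G := G) (u := spliceWord i w d.fst d.snd)
      (v := spliceWord i w d.snd d.fst) (fun j hj => ?_) (by simp)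
      (fun j hj => ?_) (by simp [hu, hv])
    · simp [hj]
    · simp [hu, hv, hj]
  have hw : w = w' := funext fun j => by simpa using congrFun hu (Fin.castLE i.2.le j)
  have hd : d = d' := by
    ext
    · simpa using congrFun hu i
    · simpa using congrFun hv i
  rw [hw, hd]

theorem sierDartOfSigma_surjective (G : SimpleGraph V) (t : ℕ) :
    Function.Surjective (sierDartOfSigma G t) := by
  rintro ⟨⟨u, v⟩, i, hlt, hadj, hgt⟩
  refine ⟨⟨i, fun j => u (Fin.castLE i.2.le j), ⟨(u i, v i), hadj⟩⟩, ?_⟩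
  refine SimpleGraph.Dart.ext _ _ (Prod.ext ?_ ?_)
  · exact (eq_spliceWord (fun j => rfl) fun j hj => (hgt j hj).1).symm
  · exact (eq_spliceWord (fun j => (hlt _ j.2).symm) fun j hj => (hgt j hj).2).symm

theorem natCard_dart_sier [Finite V] (G : SimpleGraph V) (t : ℕ) :
    Nat.card (sier G t).Dart = (∑ i ∈ Finset.range t, Nat.card V ^ i) * Nat.card G.Dart := by
  have : Finite G.Dart := Finite.of_injective _ SimpleGraph.Dart.toProd_injective
  rw [← Nat.card_eq_of_bijective _
    ⟨sierDartOfSigma_injective G t, sierDartOfSigma_surjective G t⟩, Nat.card_sigma,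
    Finset.sum_mul, ← Fin.sum_univ_eq_sum_range]
  simp [Nat.card_prod, Nat.card_fun]

theorem natCard_edgeSet_sier [Finite V] (G : SimpleGraph V) (t : ℕ) :
    Nat.card (sier G t).edgeSet =
      Nat.card G.edgeSet * ∑ i ∈ Finset.range t, Nat.card V ^ i := by
  have hdart := natCard_dart_sier G t
  simp only [SimpleGraph.natCard_dart_eq_twice_natCard_edgeSet] at hdart
  linarith

theorem stmt_0_general [Fintype V] (G : SimpleGraph V) (n t : ℕ)
    (hn : n = Fintype.card V) (h2 : 2 ≤ n) :
    Nat.card (Fin t → V) = n ^ t ∧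
    Nat.card (sier G t).edgeSet = Nat.card G.edgeSet * ((n ^ t - 1) / (n - 1)) := by
  rw [← Nat.geomSum_eq h2, natCard_edgeSet_sier, Nat.card_fun, Nat.card_eq_fintype_card, hn]
  simp

/-- `S(G,t)` has `n^t` vertices and `|E(G)|·(n^t−1)/(n−1)` edges. -/
theorem stmt_0 [Fintype V] (G : SimpleGraph V) (n t : ℕ)
    (hn : n = Fintype.card V) (h2 : 2 ≤ n) (ht : 1 ≤ t) :
    Nat.card (Fin t → V) = n ^ t ∧
    Nat.card (sier G t).edgeSet = Nat.card G.edgeSet * ((n ^ t - 1) / (n - 1)) :=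
  stmt_0_general G n t hn h2
end

section
/- Every clique of S[G,t] with at least 4 vertices is entirely contained in a copy of G inside S[G,t]. -/
variable {V : Type*}

/-!
Think of the copies of `G` in `S[G,t]` as lines and of the vertices as points. Adjacent
vertices lie in a common copy, every vertex lies in at most two copies (a class of words has
at most two elements, one per copy), and two distinct copies meet in at most one vertex.
In such an incidence structure a set of pairwise collinear points not on one line contains a
triangle `x, y, z` spanning three distinct lines; a fourth point collinear with each of them
would lie on two of these lines, hence coincide with a vertex of the triangle.
-/

open Finset

section IncidenceStructure

variable {X P : Type*} {R : X → P → Prop}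

lemma eq_or_eq_or_eq_of_collinear_triangle
    (hpoint : ∀ x a b c, a ≠ b → R x a → R x b → R x c → c = a ∨ c = b)
    (hline : ∀ a b x y, a ≠ b → R x a → R x b → R y a → R y b → x = y)
    {x y z w : X} {a b c : P} (hab : a ≠ b) (hac : a ≠ c) (hbc : b ≠ c)
    (hxa : R x a) (hxb : R x b) (hya : R y a) (hyc : R y c) (hzb : R z b) (hzc : R z c)
    (hwx : ∃ d, R x d ∧ R w d) (hwy : ∃ d, R y d ∧ R w d) (hwz : ∃ d, R z d ∧ R w d) :
    w = x ∨ w = y ∨ w = z := by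
  obtain ⟨d, hxd, hwd⟩ := hwx
  obtain ⟨e, hye, hwe⟩ := hwy
  obtain ⟨f, hzf, hwf⟩ := hwz
  have on_either : ∀ {p q r}, r = p ∨ r = q → R w r → R w p ∨ R w q := by
    rintro p q r (rfl | rfl) h
    exacts [.inl h, .inr h]
  have hwab : R w a ∨ R w b := on_either (hpoint x a b d hab hxa hxb hxd) hwd
  have hwac : R w a ∨ R w c := on_either (hpoint y a c e hac hya hyc hye) hwe
  have hwbc : R w b ∨ R w c := on_either (hpoint z b c f hbc hzb hzc hzf) hwf
  rcases hwab with hwa | hwb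
  · rcases hwbc with hwb | hwc
    · exact .inl (hline a b w x hab hwa hwb hxa hxb)
    · exact .inr (.inl (hline a c w y hac hwa hwc hya hyc))
  · rcases hwac with hwa | hwc
    · exact .inl (hline a b w x hab hwa hwb hxa hxb)
    · exact .inr (.inr (hline b c w z hbc hwb hwc hzb hzc))

theorem exists_line_of_pairwise_collinear
    (hpoint : ∀ x a b c, a ≠ b → R x a → R x b → R x c → c = a ∨ c = b)
    (hline : ∀ a b x y, a ≠ b → R x a → R x b → R y a → R y b → x = y)
    {C : Finset X} (hC : (C : Set X).Pairwise fun x y => ∃ p, R x p ∧ R y p)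
    (hcard : 4 ≤ #C) :
    ∃ p, ∀ x ∈ C, R x p := by
  classical
  by_contra! hno
  obtain ⟨x, hx⟩ : C.Nonempty := card_pos.mp (by omega)
  obtain ⟨y₀, hy₀, hy₀x⟩ := C.exists_mem_ne (by omega) x
  obtain ⟨a, hxa, -⟩ := hC hx hy₀ hy₀x.symm
  obtain ⟨z, hz, hza⟩ := hno a
  obtain ⟨b, hxb, hzb⟩ := hC hx hz (by rintro rfl; exact hza hxa)
  have hab : a ≠ b := by rintro rfl; exact hza hzb
  obtain ⟨y, hy, hyb⟩ := hno b
  obtain ⟨a', hxa', hya'⟩ := hC hx hy (by rintro rfl; exact hyb hxb)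
  have hya : R y a := by
    rcases hpoint x a b a' hab hxa hxb hxa' with rfl | rfl
    · exact hya'
    · exact absurd hya' hyb
  obtain ⟨c, hyc, hzc⟩ := hC hy hz (by rintro rfl; exact hza hya)
  have hac : a ≠ c := by rintro rfl; exact hza hzc
  have hbc : b ≠ c := by rintro rfl; exact hyb hyc
  obtain ⟨w, hw, hwxyz⟩ :=
    exists_mem_notMem_of_card_lt_card (s := {x, y, z}) (t := C) (card_le_three.trans_lt (by omega))
  simp only [mem_insert, mem_singleton, not_or] at hwxyz
  obtain ⟨hwx, hwy, hwz⟩ := hwxyz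
  rcases eq_or_eq_or_eq_of_collinear_triangle hpoint hline hab hac hbc hxa hxb hya hyc hzb hzc
    (hC hx hw (Ne.symm hwx)) (hC hy hw (Ne.symm hwy)) (hC hz hw (Ne.symm hwz)) with h | h | h
    <;> contradiction

end IncidenceStructure

section Gasket

variable {G : SimpleGraph V} {t : ℕ}

/-- The address of the copy of `G` containing the word `u`. -/
def wordInit (u : Fin t → V) : {k : Fin t // k.val + 1 < t} → V := fun k => u k

lemma wordInit_eq_iff {u v : Fin t → V} :
    wordInit u = wordInit v ↔ ∀ k : Fin t, k.val + 1 < t → u k = v k :=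
  ⟨fun h k hk => congrFun h ⟨k, hk⟩, fun h => funext fun k => h k k.2⟩

lemma linking_symm {u v : Fin t → V} (h : linking G t u v) : linking G t v u := by
  obtain ⟨p, i, hp, hi, hpre, hadj, htail⟩ := h
  exact ⟨p, i, hp, hi, fun j hj => (hpre j hj).symm, hadj.symm,
    fun j hj => ⟨(htail j hj).2, (htail j hj).1⟩⟩

/-- The linking index of a word is the last position where its letter changes. -/
lemma le_of_tail_eq {u : Fin t → V} {a b : V} {i i' : Fin t} (hi' : i'.val + 1 < t)
    (htail : ∀ j, i < j → u j = a) (hne : u i' ≠ b) (htail' : ∀ j, i' < j → u j = b) :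
    i' ≤ i := by
  by_contra! h
  have hlt : i' < ⟨i'.val + 1, hi'⟩ := Fin.lt_def.mpr (Nat.lt_succ_self _)
  exact hne ((htail i' h).trans ((htail _ (h.trans hlt)).symm.trans (htail' _ hlt)))

lemma linking_unique {u v w : Fin t → V} (hv : linking G t u v) (hw : linking G t u w) :
    v = w := by
  obtain ⟨-, i, -, hi, hpre, hadj, htail⟩ := hv
  obtain ⟨-, i', -, hi', hpre', hadj', htail'⟩ := hw
  have hii : i = i' :=
    le_antisymm (le_of_tail_eq hi (fun j hj => (htail' j hj).1) hadj.ne fun j hj => (htail j hj).1)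
      (le_of_tail_eq hi' (fun j hj => (htail j hj).1) hadj'.ne fun j hj => (htail' j hj).1)
  subst hii
  funext j
  rcases lt_trichotomy j i with h | rfl | h
  · exact (hpre j h).symm.trans (hpre' j h)
  · have hlt : j < ⟨j.val + 1, hi⟩ := Fin.lt_def.mpr (Nat.lt_succ_self _)
    exact (htail _ hlt).1.symm.trans (htail' _ hlt).1
  · exact (htail j h).2.trans (htail' j h).2.symm

/-- Two linking edges between the same pair of copies coincide. -/
lemma eq_of_linking_of_wordInit_eq {u u' v v' : Fin t → V} (hu : linking G t u u')
    (hv : linking G t v v') (h : wordInit u = wordInit v) (h' : wordInit u' = wordInit v') :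
    u = v := by
  rw [wordInit_eq_iff] at h h'
  obtain ⟨-, i, -, hi, hpre, hadj, htail⟩ := hu
  obtain ⟨-, i', -, hi', hpre', hadj', htail'⟩ := hv
  have hii : i = i' := le_antisymm
    (not_lt.mp fun hlt => hadj'.ne <| by rw [← h i' hi', ← h' i' hi']; exact hpre i' hlt)
    (not_lt.mp fun hlt => hadj.ne <| by rw [h i hi, h' i hi]; exact hpre' i hlt)
  subst hii
  funext j
  by_cases hj : j.val + 1 < t
  · exact h j hj
  · have hij : i < j := Fin.lt_def.mpr (by omega)
    rw [(htail j hij).1, (htail' j hij).1, h' i hi]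

lemma equivalence_eq_or_linking :
    Equivalence fun u v : Fin t → V => u = v ∨ linking G t u v where
  refl _ := .inl rfl
  symm
    | .inl h => .inl h.symm
    | .inr h => .inr (linking_symm h)
  trans
    | .inl rfl, h => h
    | h, .inl rfl => h
    | .inr h₁, .inr h₂ => .inl (linking_unique (linking_symm h₁) h₂)

lemma mk_eq_mk_iff {u v : Fin t → V} :
    Quotient.mk (gasketSetoid G t) u = Quotient.mk (gasketSetoid G t) v ↔
      u = v ∨ linking G t u v := by
  refine ⟨fun h => equivalence_eq_or_linking.eqvGen_iff.mp ?_, ?_⟩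
  · exact Relation.EqvGen.mono (fun _ _ => Or.inr) _ _ (Quotient.exact h)
  · rintro (rfl | h)
    · rfl
    · exact Quotient.sound (Relation.EqvGen.rel _ _ h)

lemma linking_of_mk_eq {u v : Fin t → V}
    (h : Quotient.mk (gasketSetoid G t) u = Quotient.mk (gasketSetoid G t) v)
    (hne : wordInit u ≠ wordInit v) : linking G t u v :=
  (mk_eq_mk_iff.mp h).resolve_left fun e => hne (e ▸ rfl)

variable (G t) in
def InCopy (q : {k : Fin t // k.val + 1 < t} → V) (x : Quotient (gasketSetoid G t)) : Prop :=
  ∃ u, Quotient.mk (gasketSetoid G t) u = x ∧ wordInit u = q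

/-- A non-contracted edge of `S(G,t)` changes only the last letter. -/
lemma exists_inCopy_of_adj {x y : Quotient (gasketSetoid G t)} (h : (gasket G t).Adj x y) :
    ∃ q, InCopy G t q x ∧ InCopy G t q y := by
  obtain ⟨hne, u, v, rfl, rfl, i, hpre, hadj, htail⟩ := h
  by_cases hi : i.val + 1 < t
  · exact absurd (mk_eq_mk_iff.mpr (.inr ⟨i, i, rfl, hi, hpre, hadj, htail⟩)) hne
  · refine ⟨wordInit u, ⟨u, rfl, rfl⟩, v, rfl, ?_⟩
    exact (wordInit_eq_iff.mpr fun k hk => hpre k (Fin.lt_def.mpr (by omega))).symm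

lemma inCopy_eq_or_eq {x : Quotient (gasketSetoid G t)} {a b c} (hab : a ≠ b)
    (ha : InCopy G t a x) (hb : InCopy G t b x) (hc : InCopy G t c x) : c = a ∨ c = b := by
  obtain ⟨u, rfl, rfl⟩ := ha
  obtain ⟨v, hv, rfl⟩ := hb
  obtain ⟨w, hw, rfl⟩ := hc
  have huv := linking_of_mk_eq hv.symm hab
  rcases mk_eq_mk_iff.mp hw.symm with rfl | huw
  · exact .inl rfl
  · exact .inr (congrArg wordInit (linking_unique huw huv))

lemma eq_of_inCopy {x y : Quotient (gasketSetoid G t)} {a b} (hab : a ≠ b)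
    (hxa : InCopy G t a x) (hxb : InCopy G t b x) (hya : InCopy G t a y)
    (hyb : InCopy G t b y) : x = y := by
  obtain ⟨u, rfl, hu⟩ := hxa
  obtain ⟨u', hu', hu'b⟩ := hxb
  obtain ⟨v, rfl, hv⟩ := hya
  obtain ⟨v', hv', hv'b⟩ := hyb
  have huu' := linking_of_mk_eq hu'.symm (hu ▸ hu'b ▸ hab)
  have hvv' := linking_of_mk_eq hv'.symm (hv ▸ hv'b ▸ hab)
  rw [eq_of_linking_of_wordInit_eq huu' hvv' (hu.trans hv.symm) (hu'b.trans hv'b.symm)]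

end Gasket

theorem stmt_11_general (G : SimpleGraph V) (t : ℕ)
    (C : Finset (Quotient (gasketSetoid G t)))
    (hC : (gasket G t).IsClique (C : Set (Quotient (gasketSetoid G t))))
    (hcard : 4 ≤ C.card) :
    ∃ p : Fin t → V, ∀ x ∈ C, ∃ u : Fin t → V,
      Quotient.mk (gasketSetoid G t) u = x ∧ ∀ k : Fin t, k.val + 1 < t → u k = p k := by
  obtain ⟨q, hq⟩ := exists_line_of_pairwise_collinear (R := fun x q => InCopy G t q x)
    (fun _ _ _ _ => inCopy_eq_or_eq) (fun _ _ _ _ => eq_of_inCopy)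
    (hC.mono' fun _ _ => exists_inCopy_of_adj) hcard
  obtain ⟨x₀, hx₀⟩ : C.Nonempty := card_pos.mp (by omega)
  obtain ⟨p, -, hp⟩ := hq x₀ hx₀
  refine ⟨p, fun x hx => ?_⟩
  obtain ⟨u, hu, hup⟩ := hq x hx
  exact ⟨u, hu, wordInit_eq_iff.mp (hup.trans hp.symm)⟩

/-- every clique of `S[G,t]` with at least `4` vertices lies entirely in a
copy of `G` inside `S[G,t]`, i.e. all its vertices have representatives agreeing on the
first `t − 1` letters. -/
theorem stmt_11 (G : SimpleGraph V) (t : ℕ) (ht : 1 ≤ t)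
    (C : Finset (Quotient (gasketSetoid G t)))
    (hC : (gasket G t).IsClique (C : Set (Quotient (gasketSetoid G t))))
    (hcard : 4 ≤ C.card) :
    ∃ p : Fin t → V, ∀ x ∈ C, ∃ u : Fin t → V,
      Quotient.mk (gasketSetoid G t) u = x ∧ ∀ k : Fin t, k.val + 1 < t → u k = p k :=
  stmt_11_general G t C hC hcard
end

section
/- For every simple graph G and every positive integer t, the clique number of the generalized Sierpiński gasket graph equals that of the base graph: ω(S[G,t]) = ω(G). -/
variable {V : Type*}

/-! A vertex of `S[G, s + 1]` is the class of one word or of the two ends of a linking edge, and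
the prefixes of length `s` of those two ends are adjacent in `S(G, s)`. For each prefix `p` the
words `p a` form a copy of `G` embedded in the gasket, and adjacent vertices of the gasket lie in a
common copy. Hence a clique either lies in a single copy, and is then a clique of `G`, or its
vertices are all contracted, and their pairs of copies are pairwise intersecting edges of `S(G, s)`
with no common end. Such edges form a triangle, so the clique has at most three vertices, while a
triangle of `S(G, s)` produces a triangle of `G`. -/

open SimpleGraph

theorem SimpleGraph.exists_triangle_of_pairwise_meet {α : Type*} {H : SimpleGraph α}
    {E : Set (Sym2 α)} (hE : E ⊆ H.edgeSet) (hne : E.Nonempty)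
    (hmeet : ∀ e ∈ E, ∀ f ∈ E, ∃ a, a ∈ e ∧ a ∈ f) (hstar : ∀ a, ∃ e ∈ E, a ∉ e) :
    ∃ a b c, H.Adj a b ∧ H.Adj a c ∧ H.Adj b c ∧ E ⊆ {s(a, b), s(a, c), s(b, c)} := by
  have other {a b : α} {f : Sym2 α} (he : s(a, b) ∈ E) (hf : f ∈ E) (haf : a ∉ f) : b ∈ f := by
    obtain ⟨x, hxe, hxf⟩ := hmeet _ he f hf
    rcases Sym2.mem_iff.1 hxe with rfl | rfl
    exacts [absurd hxf haf, hxf]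
  obtain ⟨e, he⟩ := hne
  induction e using Sym2.ind with | h a b => ?_
  obtain ⟨f, hf, haf⟩ := hstar a
  obtain ⟨c, rfl⟩ := Sym2.mem_iff_exists.1 (other he hf haf)
  obtain ⟨g, hg, hbg⟩ := hstar b
  have hac : a ≠ c := by rintro rfl; exact haf (Sym2.mem_mk_right b a)
  obtain rfl : g = s(a, c) := (Sym2.mem_and_mem_iff hac).1
    ⟨other (Sym2.eq_swap ▸ he) hg hbg, other hf hg hbg⟩
  have hab := hE he
  have hbc := hE hf
  refine ⟨a, b, c, hab, hE hg, hbc, fun h hh => ?_⟩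
  simp only [Set.mem_insert_iff, Set.mem_singleton_iff]
  by_cases hah : a ∈ h
  · by_cases hbh : b ∈ h
    · exact .inl ((Sym2.mem_and_mem_iff (H.ne_of_adj hab)).1 ⟨hah, hbh⟩)
    · exact .inr (.inl ((Sym2.mem_and_mem_iff hac).1 ⟨hah, other hf hh hbh⟩))
  · exact .inr (.inr ((Sym2.mem_and_mem_iff (H.ne_of_adj hbc)).1
      ⟨other he hh hah, other hg hh hah⟩))

theorem SimpleGraph.Embedding.exists_isNClique_of_subset_range {α β : Type*}
    {G : SimpleGraph α} {H : SimpleGraph β} (f : G ↪g H) {n : ℕ} {S : Finset β}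
    (hS : H.IsNClique n S) (hSf : (S : Set β) ⊆ Set.range f) : ∃ T : Finset α, G.IsNClique n T := by
  classical
  obtain ⟨T, -, rfl⟩ := Finset.subset_set_image_iff.1 (Set.image_univ ▸ hSf)
  refine ⟨T, fun a ha b hb hab => ?_, ?_⟩
  · exact f.map_adj_iff.1 (hS.1 (Finset.mem_image_of_mem f ha) (Finset.mem_image_of_mem f hb)
      (f.injective.ne hab))
  · rw [← hS.2, Finset.card_image_of_injective _ f.injective]

theorem SimpleGraph.cliqueNum_eq_of_forall_cliqueFree_iff {α β : Type*} {G : SimpleGraph α}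
    {H : SimpleGraph β} (h : ∀ n, G.CliqueFree n ↔ H.CliqueFree n) :
    G.cliqueNum = H.cliqueNum := by
  have hsets (n : ℕ) : (∃ S, G.IsNClique n S) ↔ ∃ T, H.IsNClique n T := by
    simpa only [CliqueFree, not_forall, not_not] using (h n).not
  simp only [cliqueNum, hsets]

section Words

variable {G : SimpleGraph V}

def SierAdjAt (G : SimpleGraph V) {t : ℕ} (u v : Fin t → V) (i : Fin t) : Prop :=
  (∀ j < i, u j = v j) ∧ G.Adj (u i) (v i) ∧ ∀ j, i < j → u j = v i ∧ v j = u i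

namespace SierAdjAt

variable {t : ℕ} {u v w : Fin t → V} {i i' : Fin t}

theorem symm (h : SierAdjAt G u v i) : SierAdjAt G v u i :=
  ⟨fun j hj => (h.1 j hj).symm, h.2.1.symm, fun j hj => (h.2.2 j hj).symm⟩

theorem index_unique (h : SierAdjAt G u v i) (h' : SierAdjAt G u v i') : i = i' := by
  rcases lt_trichotomy i i' with hlt | rfl | hlt
  · exact absurd (h'.1 i hlt) h.2.1.ne
  · rfl
  · exact absurd (h.1 i' hlt) h'.2.1.ne

theorem right_unique (h : SierAdjAt G u v i) (h' : SierAdjAt G u w i') (hvw : v i = w i') :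
    i = i' ∧ v = w := by
  have hii' : i = i' := by
    rcases lt_trichotomy i i' with hlt | rfl | hlt
    · exact absurd ((h.2.2 i' hlt).1.trans hvw) h'.2.1.ne
    · rfl
    · exact absurd ((h'.2.2 i hlt).1.trans hvw.symm) h.2.1.ne
  subst hii'
  refine ⟨rfl, funext fun j => ?_⟩
  rcases lt_trichotomy j i with hlt | rfl | hlt
  · exact (h.1 j hlt).symm.trans (h'.1 j hlt)
  · exact hvw
  · exact (h.2.2 j hlt).2.trans (h'.2.2 j hlt).2.symm

theorem not_lt_of_triangle {a b c : Fin t → V} {j k : Fin t} (hab : SierAdjAt G a b i)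
    (hac : SierAdjAt G a c j) (hbc : SierAdjAt G b c k) : ¬ i < j := by
  intro hij
  have hki : k = i := by
    rcases lt_trichotomy k i with hlt | rfl | hlt
    · exact absurd ((hab.1 k hlt).symm.trans (hac.1 k (hlt.trans hij))) hbc.2.1.ne
    · rfl
    · exact absurd ((hac.1 i hij).trans (hbc.1 i hlt).symm) hab.2.1.ne
  subst hki
  exact hac.2.1.ne ((hab.2.2 j hij).1.trans (hbc.2.2 j hij).2.symm)

end SierAdjAt

theorem not_cliqueFree_three_of_sier_adj {t : ℕ} {a b c : Fin t → V} (hab : (sier G t).Adj a b)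
    (hac : (sier G t).Adj a c) (hbc : (sier G t).Adj b c) : ¬ G.CliqueFree 3 := by
  classical
  obtain ⟨i, hab : SierAdjAt G a b i⟩ := hab
  obtain ⟨j, hac : SierAdjAt G a c j⟩ := hac
  obtain ⟨k, hbc : SierAdjAt G b c k⟩ := hbc
  obtain rfl : i = j := le_antisymm (not_lt.1 (hac.not_lt_of_triangle hab hbc.symm))
    (not_lt.1 (hab.not_lt_of_triangle hac hbc))
  obtain rfl : i = k := le_antisymm (not_lt.1 (hbc.not_lt_of_triangle hab.symm hac.symm))
    (not_lt.1 (hab.symm.not_lt_of_triangle hbc hac))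
  exact fun h => h {a i, b i, c i} (is3Clique_triple_iff.2 ⟨hab.2.1, hac.2.1, hbc.2.1⟩)

variable {s : ℕ} {u v : Fin (s + 1) → V}

theorem sierAdjAt_castSucc_iff {i : Fin s} :
    SierAdjAt G u v i.castSucc ↔ SierAdjAt G (Fin.init u) (Fin.init v) i ∧
      u (Fin.last s) = Fin.init v i ∧ v (Fin.last s) = Fin.init u i := by
  simp only [SierAdjAt, Fin.forall_fin_succ', Fin.castSucc_lt_castSucc_iff, Fin.castSucc_lt_last,
    Fin.init, not_lt.2 (Fin.le_last _), false_imp_iff, and_true, forall_const]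
  tauto

theorem sierAdjAt_last_iff :
    SierAdjAt G u v (Fin.last s) ↔
      Fin.init u = Fin.init v ∧ G.Adj (u (Fin.last s)) (v (Fin.last s)) := by
  simp [SierAdjAt, Fin.forall_fin_succ', Fin.castSucc_lt_last, not_lt.2 (Fin.le_last _),
    funext_iff, Fin.init]

theorem linking_succ_iff_exists_castSucc :
    linking G (s + 1) u v ↔ ∃ i : Fin s, SierAdjAt G u v i.castSucc := by
  constructor
  · rintro ⟨_, i, rfl, hi, h⟩
    exact ⟨⟨i, by omega⟩, h⟩
  · rintro ⟨i, h⟩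
    exact ⟨i, i.castSucc, rfl, by simp, h⟩

theorem linking_succ_iff :
    linking G (s + 1) u v ↔ ∃ i : Fin s, SierAdjAt G (Fin.init u) (Fin.init v) i ∧
      u (Fin.last s) = Fin.init v i ∧ v (Fin.last s) = Fin.init u i := by
  simp only [linking_succ_iff_exists_castSucc, sierAdjAt_castSucc_iff]

theorem sierAdj_succ_iff :
    sierAdj G (s + 1) u v ↔ linking G (s + 1) u v ∨
      Fin.init u = Fin.init v ∧ G.Adj (u (Fin.last s)) (v (Fin.last s)) := by
  rw [linking_succ_iff_exists_castSucc, ← sierAdjAt_last_iff]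
  exact Fin.exists_fin_succ'

theorem linking.symm {t : ℕ} {u v : Fin t → V} (h : linking G t u v) : linking G t v u := by
  obtain ⟨p, i, hp, hi, h⟩ := h
  exact ⟨p, i, hp, hi, SierAdjAt.symm h⟩

theorem linking.right_unique {w : Fin (s + 1) → V} (hv : linking G (s + 1) u v)
    (hw : linking G (s + 1) u w) : v = w := by
  obtain ⟨i, hv, huv, hvu⟩ := linking_succ_iff.1 hv
  obtain ⟨i', hw, huw, hwu⟩ := linking_succ_iff.1 hw
  obtain ⟨rfl, hinit⟩ := hv.right_unique hw (huv.symm.trans huw)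
  rw [← Fin.snoc_init_self v, ← Fin.snoc_init_self w, hinit, hvu, hwu]

theorem gasketSetoid_rel_iff : gasketSetoid G (s + 1) u v ↔ u = v ∨ linking G (s + 1) u v := by
  have hequiv : Equivalence fun u v : Fin (s + 1) → V => u = v ∨ linking G (s + 1) u v := by
    refine ⟨fun _ => .inl rfl, fun h => h.imp Eq.symm linking.symm, ?_⟩
    rintro u v w (rfl | huv) (rfl | hvw)
    exacts [.inl rfl, .inr hvw, .inr huv, .inl (huv.symm.right_unique hvw)]
  exact ⟨fun h => hequiv.eqvGen_iff.1 (h.mono fun _ _ => .inr),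
    fun h => h.elim (fun h => h ▸ Relation.EqvGen.refl u) (.rel u v)⟩

end Words

section Cells

variable {G : SimpleGraph V} {s : ℕ}

/-- Vertex `a` of the copy of `G` in `S[G, s + 1]` indexed by the prefix `p`. -/
def gasketCell (G : SimpleGraph V) (p : Fin s → V) (a : V) : Quotient (gasketSetoid G (s + 1)) :=
  Quotient.mk _ (Fin.snoc p a)

theorem gasketCell_eq_gasketCell_iff {p q : Fin s → V} {a b : V} :
    gasketCell G p a = gasketCell G q b ↔
      p = q ∧ a = b ∨ ∃ i, SierAdjAt G p q i ∧ a = q i ∧ b = p i := by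
  rw [gasketCell, gasketCell, Quotient.eq, gasketSetoid_rel_iff, linking_succ_iff]
  simp only [Fin.snoc_injective2.eq_iff, Fin.init_snoc, Fin.snoc_last]

theorem exists_sierAdjAt_of_gasketCell_eq {p q : Fin s → V} {a b : V}
    (h : gasketCell G p a = gasketCell G q b) (hpq : p ≠ q) :
    ∃ i, SierAdjAt G p q i ∧ a = q i ∧ b = p i :=
  (gasketCell_eq_gasketCell_iff.1 h).resolve_left fun h => hpq h.1

theorem gasketCell_injective (p : Fin s → V) : Function.Injective (gasketCell G p) := by
  intro a b h
  rcases gasketCell_eq_gasketCell_iff.1 h with ⟨-, hab⟩ | ⟨i, hi, -⟩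
  exacts [hab, absurd hi.2.1 (G.loopless.irrefl _)]

theorem exists_mem_range_gasketCell (x : Quotient (gasketSetoid G (s + 1))) :
    ∃ p, x ∈ Set.range (gasketCell G p) := by
  induction x using Quotient.inductionOn with
  | h u => exact ⟨Fin.init u, u (Fin.last s), by rw [gasketCell, Fin.snoc_init_self]⟩

variable {p q : Fin s → V} {x y : Quotient (gasketSetoid G (s + 1))}

theorem sier_adj_of_mem_range_gasketCell (hpq : p ≠ q) (hp : x ∈ Set.range (gasketCell G p))
    (hq : x ∈ Set.range (gasketCell G q)) : (sier G s).Adj p q := by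
  obtain ⟨a, rfl⟩ := hp
  obtain ⟨b, hb⟩ := hq
  obtain ⟨i, hi, -⟩ := exists_sierAdjAt_of_gasketCell_eq hb.symm hpq
  exact ⟨i, hi⟩

theorem eq_or_eq_of_mem_range_gasketCell {r : Fin s → V} (hpq : p ≠ q)
    (hp : x ∈ Set.range (gasketCell G p)) (hq : x ∈ Set.range (gasketCell G q))
    (hr : x ∈ Set.range (gasketCell G r)) : r = p ∨ r = q := by
  obtain ⟨a, rfl⟩ := hp
  obtain ⟨b, hb⟩ := hq
  obtain ⟨c, hc⟩ := hr
  obtain ⟨i, hi, hai, -⟩ := exists_sierAdjAt_of_gasketCell_eq hb.symm hpq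
  by_cases hpr : p = r
  · exact .inl hpr.symm
  obtain ⟨i', hi', hai', -⟩ := exists_sierAdjAt_of_gasketCell_eq hc.symm hpr
  exact .inr (hi.right_unique hi' (hai.symm.trans hai')).2.symm

theorem eq_of_mem_range_gasketCell (hpq : p ≠ q)
    (hxp : x ∈ Set.range (gasketCell G p)) (hxq : x ∈ Set.range (gasketCell G q))
    (hyp : y ∈ Set.range (gasketCell G p)) (hyq : y ∈ Set.range (gasketCell G q)) : x = y := by
  obtain ⟨a, rfl⟩ := hxp
  obtain ⟨a', rfl⟩ := hyp
  obtain ⟨b, hb⟩ := hxq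
  obtain ⟨b', hb'⟩ := hyq
  obtain ⟨i, hi, hai, -⟩ := exists_sierAdjAt_of_gasketCell_eq hb.symm hpq
  obtain ⟨i', hi', hai', -⟩ := exists_sierAdjAt_of_gasketCell_eq hb'.symm hpq
  rw [hai, hai', hi.index_unique hi']

theorem exists_gasketCell_of_adj (h : (gasket G (s + 1)).Adj x y) :
    ∃ p a b, G.Adj a b ∧ gasketCell G p a = x ∧ gasketCell G p b = y := by
  obtain ⟨hxy, u, v, rfl, rfl, huv⟩ := h
  rcases sierAdj_succ_iff.1 huv with hl | ⟨hinit, hadj⟩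
  · exact absurd (Quotient.sound (Relation.EqvGen.rel _ _ hl)) hxy
  · refine ⟨Fin.init u, _, _, hadj, ?_, ?_⟩
    · rw [gasketCell, Fin.snoc_init_self]
    · rw [gasketCell, hinit, Fin.snoc_init_self]

theorem gasketCell_adj_iff {a b : V} :
    (gasket G (s + 1)).Adj (gasketCell G p a) (gasketCell G p b) ↔ G.Adj a b := by
  constructor
  · intro h
    obtain ⟨q, a', b', hadj, ha, hb⟩ := exists_gasketCell_of_adj h
    by_cases hpq : p = q
    · subst hpq
      rwa [← gasketCell_injective p ha, ← gasketCell_injective p hb]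
    · exact absurd (eq_of_mem_range_gasketCell hpq ⟨a, rfl⟩ ⟨a', ha⟩ ⟨b, rfl⟩ ⟨b', hb⟩) h.ne
  · intro h
    refine ⟨(gasketCell_injective p).ne h.ne, _, _, rfl, rfl, sierAdj_succ_iff.2 (.inr ?_)⟩
    simpa only [Fin.init_snoc, Fin.snoc_last, true_and] using h

def gasketCellEmbedding (G : SimpleGraph V) (p : Fin s → V) : G ↪g gasket G (s + 1) where
  toFun := gasketCell G p
  inj' := gasketCell_injective p
  map_rel_iff' := gasketCell_adj_iff

theorem exists_common_gasketCell {S : Finset (Quotient (gasketSetoid G (s + 1)))}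
    (hS : (gasket G (s + 1)).IsClique S) (hx : x ∈ S) (hy : y ∈ S) : ∃ p, x ∈ Set.range (gasketCell G p) ∧ y ∈ Set.range (gasketCell G p) := by
  by_cases hxy : x = y
  · obtain ⟨p, hp⟩ := exists_mem_range_gasketCell x
    exact ⟨p, hp, hxy ▸ hp⟩
  · obtain ⟨p, a, b, -, ha, hb⟩ := exists_gasketCell_of_adj (hS hx hy hxy)
    exact ⟨p, ⟨a, ha⟩, ⟨b, hb⟩⟩

end Cells

section Contracted

variable {G : SimpleGraph V} {s : ℕ}

def IsContractedOver (G : SimpleGraph V) (x : Quotient (gasketSetoid G (s + 1)))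
    (e : Sym2 (Fin s → V)) : Prop :=
  ¬ e.IsDiag ∧ ∀ p ∈ e, x ∈ Set.range (gasketCell G p)

theorem isContractedOver_mk_iff {x : Quotient (gasketSetoid G (s + 1))} {p q : Fin s → V} :
    IsContractedOver G x s(p, q) ↔
      p ≠ q ∧ x ∈ Set.range (gasketCell G p) ∧ x ∈ Set.range (gasketCell G q) := by
  simp only [IsContractedOver, Sym2.mk_isDiag_iff, Sym2.mem_iff, forall_eq_or_imp, forall_eq]

namespace IsContractedOver

variable {x y : Quotient (gasketSetoid G (s + 1))} {e : Sym2 (Fin s → V)}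

theorem mem_edgeSet (hx : IsContractedOver G x e) : e ∈ (sier G s).edgeSet := by
  induction e using Sym2.ind with | h p q => ?_
  obtain ⟨hpq, hp, hq⟩ := isContractedOver_mk_iff.1 hx
  exact sier_adj_of_mem_range_gasketCell hpq hp hq

theorem mem (hx : IsContractedOver G x e) {p : Fin s → V}
    (hp : x ∈ Set.range (gasketCell G p)) : p ∈ e := by
  induction e using Sym2.ind with | h q q' => ?_
  obtain ⟨hqq', hq, hq'⟩ := isContractedOver_mk_iff.1 hx
  rcases eq_or_eq_of_mem_range_gasketCell hqq' hq hq' hp with rfl | rfl <;> simp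

theorem unique (hx : IsContractedOver G x e) (hy : IsContractedOver G y e) : x = y := by
  induction e using Sym2.ind with | h p q => ?_
  obtain ⟨hpq, hxp, hxq⟩ := isContractedOver_mk_iff.1 hx
  obtain ⟨-, hyp, hyq⟩ := isContractedOver_mk_iff.1 hy
  exact eq_of_mem_range_gasketCell hpq hxp hxq hyp hyq

end IsContractedOver

variable {S : Finset (Quotient (gasketSetoid G (s + 1)))}

theorem exists_isContractedOver (hS : (gasket G (s + 1)).IsClique S)
    (hspread : ∀ p, ∃ y ∈ S, y ∉ Set.range (gasketCell G p))
    {x : Quotient (gasketSetoid G (s + 1))} (hx : x ∈ S) : ∃ e, IsContractedOver G x e := by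
  obtain ⟨p, hp⟩ := exists_mem_range_gasketCell x
  obtain ⟨y, hy, hyp⟩ := hspread p
  obtain ⟨q, hxq, hyq⟩ := exists_common_gasketCell hS hx hy
  have hpq : p ≠ q := by rintro rfl; exact hyp hyq
  exact ⟨s(p, q), isContractedOver_mk_iff.2 ⟨hpq, hp, hxq⟩⟩

theorem card_le_three_and_not_cliqueFree_three (hS : (gasket G (s + 1)).IsClique S)
    (hne : S.Nonempty) (hspread : ∀ p, ∃ x ∈ S, x ∉ Set.range (gasketCell G p)) :
    S.card ≤ 3 ∧ ¬ G.CliqueFree 3 := by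
  classical
  obtain ⟨a, b, c, hab, hac, hbc, hsub⟩ :=
    exists_triangle_of_pairwise_meet (H := sier G s)
      (E := {e | ∃ x ∈ S, IsContractedOver G x e})
      (fun e ⟨_, _, hxe⟩ => hxe.mem_edgeSet)
      (by
        obtain ⟨x, hx⟩ := hne
        obtain ⟨e, he⟩ := exists_isContractedOver hS hspread hx
        exact ⟨e, x, hx, he⟩)
      (by
        rintro e ⟨x, hx, hxe⟩ f ⟨y, hy, hyf⟩
        obtain ⟨p, hxp, hyp⟩ := exists_common_gasketCell hS hx hy
        exact ⟨p, hxe.mem hxp, hyf.mem hyp⟩)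
      (by
        intro p
        obtain ⟨x, hx, hxp⟩ := hspread p
        obtain ⟨e, he⟩ := exists_isContractedOver hS hspread hx
        exact ⟨e, ⟨x, hx, he⟩, fun hp => hxp (he.2 p hp)⟩)
  refine ⟨?_, not_cliqueFree_three_of_sier_adj hab hac hbc⟩
  calc S.card ≤ ({s(a, b), s(a, c), s(b, c)} : Finset _).card := by
        refine Finset.card_le_card_of_forall_subsingleton (IsContractedOver G) (fun x hx => ?_)
          fun e _ x ⟨_, hxe⟩ y ⟨_, hye⟩ => hxe.unique hye
        obtain ⟨e, he⟩ := exists_isContractedOver hS hspread hx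
        exact ⟨e, by simpa using hsub ⟨x, hx, he⟩, he⟩
    _ ≤ 3 := Finset.card_le_three

theorem gasket_cliqueFree_iff {n : ℕ} : (gasket G (s + 1)).CliqueFree n ↔ G.CliqueFree n := by
  constructor
  · intro h T hT
    rcases T.eq_empty_or_nonempty with rfl | ⟨c, -⟩
    · exact h ∅ (isNClique_empty.2 (isNClique_empty.1 hT))
    · exact h.comap (gasketCellEmbedding G fun _ => c).isContained T hT
  · intro h S hS
    rcases S.eq_empty_or_nonempty with rfl | hne
    · exact h ∅ (isNClique_empty.2 (isNClique_empty.1 hS))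
    by_cases hcell : ∃ p : Fin s → V, ∀ x ∈ S, x ∈ Set.range (gasketCell G p)
    · obtain ⟨p, hp⟩ := hcell
      obtain ⟨T, hT⟩ := (gasketCellEmbedding G p).exists_isNClique_of_subset_range hS hp
      exact h T hT
    · push Not at hcell
      obtain ⟨hcard, htri⟩ := card_le_three_and_not_cliqueFree_three hS.1 hne hcell
      exact htri (h.mono (hS.2 ▸ hcard))

end Contracted

/-- `ω(S[G,t]) = ω(G)` for every graph `G` and every positive integer `t`. -/
theorem stmt_12 (G : SimpleGraph V) (t : ℕ) (ht : 1 ≤ t) :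
    (gasket G t).cliqueNum = G.cliqueNum := by
  obtain ⟨s, rfl⟩ := Nat.exists_eq_add_of_le' ht
  exact cliqueNum_eq_of_forall_cliqueFree_iff fun _ => gasket_cliqueFree_iff
end

section
/- For every simple graph G, the chromatic number of S[G,2] equals the chromatic number of G: χ(S[G,2]) = χ(G). Moreover, if f : V(G) → Z/kZ is a proper k-coloring of G, then the map sending the vertex xy to f(x) + f(y) (mod k) and the contracted vertex {x,y}_2 to f(x) + f(y) (mod k) is a proper k-coloring of S[G,2]. -/
/-!
In `S(G,2)` an edge `u v` either sits at the first letter, and then it is the linking edge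
`ab ~ ba` that gets contracted, or it sits at the second letter, `xa ~ xb` with `ab ∈ E(G)`.
So `xy ↦ f x + f y` is constant on contracted pairs and, by cancellation of the common
letter `x`, proper whenever `f` is; in particular `χ(S[G,2]) ≤ χ(G)`. Conversely the copy
`x ↦ a x` of `G` survives the contraction, so `G` maps homomorphically into `S[G,2]`.
-/

variable {V : Type*}

section

open SimpleGraph

variable {G : SimpleGraph V}

lemma sierAdj_of_linking {t : ℕ} {u v : Fin t → V} (h : linking G t u v) : sierAdj G t u v := by
  obtain ⟨_, i, -, -, h⟩ := h
  exact ⟨i, h⟩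

lemma linking_two_iff {u v : Fin 2 → V} :
    linking G 2 u v ↔ G.Adj (u 0) (v 0) ∧ u 1 = v 0 ∧ v 1 = u 0 := by
  constructor
  · rintro ⟨p, i, rfl, hi, -, hadj, hlater⟩
    obtain rfl : i = 0 := Fin.ext (by omega)
    exact ⟨hadj, hlater 1 Fin.zero_lt_one⟩
  · rintro ⟨hadj, h1, h2⟩
    refine ⟨0, 0, rfl, by decide, fun j hj => absurd hj (Fin.not_lt_zero j), hadj, ?_⟩
    intro j hj
    obtain rfl : j = 1 := Fin.ext (by have := j.isLt; simp only [Fin.lt_def] at hj; omega)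
    exact ⟨h1, h2⟩

lemma sierAdj_two_iff {u v : Fin 2 → V} :
    sierAdj G 2 u v ↔ linking G 2 u v ∨ (u 0 = v 0 ∧ G.Adj (u 1) (v 1)) := by
  constructor
  · rintro ⟨i, hbefore, hadj, hlater⟩
    fin_cases i
    · exact Or.inl (linking_two_iff.2 ⟨hadj, hlater 1 Fin.zero_lt_one⟩)
    · exact Or.inr ⟨hbefore 0 Fin.zero_lt_one, hadj⟩
  · rintro (hlink | ⟨h0, hadj⟩)
    · exact sierAdj_of_linking hlink
    · refine ⟨1, fun j hj => ?_, hadj, fun j hj => absurd hj (not_lt.2 (Fin.le_last j))⟩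
      obtain rfl : j = 0 := Fin.ext (by simp only [Fin.lt_def] at hj; omega)
      exact h0

lemma linking_two_trans {u v w : Fin 2 → V} (huv : linking G 2 u v)
    (hvw : linking G 2 v w) : u = w := by
  rw [linking_two_iff] at huv hvw
  ext j
  fin_cases j
  · exact huv.2.2.symm.trans hvw.2.1
  · exact huv.2.1.trans hvw.2.2.symm

lemma eq_or_linking_two_of_eqvGen {u v : Fin 2 → V} (h : Relation.EqvGen (linking G 2) u v) :
    u = v ∨ linking G 2 u v := by
  induction h with
  | rel _ _ h => exact Or.inr h
  | refl => exact Or.inl rfl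
  | symm _ _ _ ih =>
    rcases ih with rfl | h
    · exact Or.inl rfl
    · rw [linking_two_iff] at h ⊢
      exact Or.inr ⟨h.1.symm, h.2.2, h.2.1⟩
  | trans _ _ _ _ _ ih₁ ih₂ =>
    rcases ih₁ with rfl | h₁
    · exact ih₂
    · rcases ih₂ with rfl | h₂
      · exact Or.inr h₁
      · exact Or.inl (linking_two_trans h₁ h₂)

lemma mk_two_eq_mk_iff {u v : Fin 2 → V} :
    Quotient.mk (gasketSetoid G 2) u = Quotient.mk (gasketSetoid G 2) v ↔
      u = v ∨ linking G 2 u v := by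
  refine ⟨fun h => eq_or_linking_two_of_eqvGen (Quotient.exact h), ?_⟩
  rintro (rfl | h)
  · rfl
  · exact Quotient.sound (Relation.EqvGen.rel _ _ h)

lemma exists_of_gasket_two_adj {x y : Quotient (gasketSetoid G 2)} (h : (gasket G 2).Adj x y) :
    ∃ u v, Quotient.mk _ u = x ∧ Quotient.mk _ v = y ∧ u 0 = v 0 ∧ G.Adj (u 1) (v 1) := by
  obtain ⟨hne, u, v, rfl, rfl, huv⟩ := h
  rcases sierAdj_two_iff.1 huv with hlink | hcopy
  · exact absurd (mk_two_eq_mk_iff.2 (Or.inr hlink)) hne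
  · exact ⟨u, v, rfl, rfl, hcopy⟩

section Coloring

variable {A : Type*} [AddCommSemigroup A] [IsCancelAdd A]

lemma ne_of_gasket_two_adj {f : V → A} (hf : ∀ a b, G.Adj a b → f a ≠ f b)
    {g : Quotient (gasketSetoid G 2) → A}
    (hg : ∀ u : Fin 2 → V, g (Quotient.mk _ u) = f (u 0) + f (u 1))
    {x y : Quotient (gasketSetoid G 2)} (h : (gasket G 2).Adj x y) : g x ≠ g y := by
  obtain ⟨u, v, rfl, rfl, h0, hadj⟩ := exists_of_gasket_two_adj h
  rw [hg, hg, h0]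
  exact fun heq => hf _ _ hadj (add_left_cancel heq)

def gasketTwoColoring (C : G.Coloring A) : (gasket G 2).Coloring A :=
  Coloring.mk
    (Quotient.lift (fun u : Fin 2 → V => C (u 0) + C (u 1)) fun u v huv => by
      rcases mk_two_eq_mk_iff.1 (Quotient.sound huv) with rfl | hlink
      · rfl
      · obtain ⟨-, h1, h2⟩ := linking_two_iff.1 hlink
        simp only [h1, h2, add_comm])
    fun hxy => ne_of_gasket_two_adj (fun _ _ h => C.valid h) (fun _ => rfl) hxy

end Coloring

theorem SimpleGraph.Colorable.gasket_two {n : ℕ} (hc : G.Colorable n) :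
    (gasket G 2).Colorable n :=
  ⟨gasketTwoColoring hc.some⟩

def gasketTwoHom (a : V) : G →g gasket G 2 where
  toFun x := Quotient.mk _ (topWord 2 a x)
  map_rel' {x y} hxy := by
    refine ⟨fun heq => ?_, _, _, rfl, rfl, sierAdj_two_iff.2 (Or.inr ⟨rfl, hxy⟩)⟩
    rcases mk_two_eq_mk_iff.1 heq with hwords | hlink
    · exact hxy.ne (congrFun hwords 1)
    · exact G.loopless.irrefl a (linking_two_iff.1 hlink).1

lemma chromaticNumber_gasket_two : (gasket G 2).chromaticNumber = G.chromaticNumber := by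
  refine le_antisymm (chromaticNumber_le_of_forall_imp fun _ => Colorable.gasket_two) ?_
  cases isEmpty_or_nonempty V with
  | inl _ => simp [chromaticNumber_eq_zero_of_isEmpty]
  | inr hV => exact chromaticNumber_mono_of_hom (gasketTwoHom hV.some)

end

/-- `χ(S[G,2]) = χ(G)`; moreover, if `f` is a proper `k`-coloring of `G`
with colors in `ZMod k`, then the map sending (the class of) the word `xy` — and in
particular each contracted vertex `{x,y}_2` — to `f x + f y` is a proper coloring of
`S[G,2]`. -/
theorem stmt_14 (G : SimpleGraph V) :
    (gasket G 2).chromaticNumber = G.chromaticNumber ∧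
    ∀ (k : ℕ) (f : V → ZMod k), (∀ a b, G.Adj a b → f a ≠ f b) →
      ∀ g : Quotient (gasketSetoid G 2) → ZMod k,
        (∀ u : Fin 2 → V, g (Quotient.mk (gasketSetoid G 2) u) = f (u 0) + f (u 1)) →
        ∀ x y, (gasket G 2).Adj x y → g x ≠ g y :=
  ⟨chromaticNumber_gasket_two, fun _ _ hf _ hg _ _ h => ne_of_gasket_two_adj hf hg h⟩
end

section
/- For every simple graph G and positive integer t, χ(G) ≤ χ(S[G,t]) ≤ χ(G) + 1. -/
variable {V : Type*}

/-!
Colour a word `u` of length `t` by the potential `∑ⱼ ω(t-1-j) · c (u j)` in `ZMod (n+1)`,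
where `c` is a proper `n`-colouring of `G` and the weights `ω = 1, 1, 2, 4, …` satisfy
`ω k = ∑_{m<k} ω m` for `k ≥ 1`. The endpoints of a linking edge at position `i` agree
before `i` and read `a b … b`, `b a … a` from `i` on, so by the weight identity both get
`ω(t-1-i) · (c a + c b)` from the positions `≥ i`: the potential is constant on contracted
classes. Every other edge of `S[G,t]` changes only the last letter, of weight `1`, hence is
properly coloured. With `c` the indicator of a vertex, the same potential separates the
classes of the words `x … x a`, which embeds `G` in `S[G,t]`.
-/

open Finset SimpleGraph

def tailWeight : ℕ → ℕ
  | 0 => 1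
  | k + 1 => 2 ^ k

lemma sum_range_tailWeight (k : ℕ) :
    ∑ m ∈ range (k + 1), tailWeight m = tailWeight (k + 1) := by
  induction k with
  | zero => rfl
  | succ k ih =>
    rw [sum_range_succ, ih]
    simp only [tailWeight]
    ring

lemma sum_Ioi_tailWeight_rev {t : ℕ} {i : Fin t} (hi : i.val + 1 < t) :
    ∑ j ∈ Ioi i, tailWeight j.rev = tailWeight i.rev := by
  obtain ⟨k, hk⟩ : ∃ k, (i.rev : ℕ) = k + 1 := ⟨t - 2 - i, by rw [Fin.val_rev]; omega⟩
  calc ∑ j ∈ Ioi i, tailWeight j.rev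
      = ∑ j ∈ (Ioi i).map Fin.revPerm.toEmbedding, tailWeight j := by rw [sum_map]; rfl
    _ = ∑ j ∈ (Iio i.rev).map Fin.valEmbedding, tailWeight j := by
        rw [Fin.map_revPerm_Ioi, sum_map]; rfl
    _ = tailWeight i.rev := by
        rw [Fin.map_valEmbedding_Iio, Nat.Iio_eq_range, hk, sum_range_tailWeight]

variable {M : Type*} [CommRing M]

def potential {t : ℕ} (φ : V → M) (u : Fin t → V) : M :=
  ∑ j, (tailWeight j.rev : M) * φ (u j)

lemma potential_eq_sum_Iio_add {t : ℕ} (φ : V → M) (u : Fin t → V) (i : Fin t) :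
    potential φ u = ∑ j ∈ Iio i, (tailWeight j.rev : M) * φ (u j) +
      ((tailWeight i.rev : M) * φ (u i) + ∑ j ∈ Ioi i, (tailWeight j.rev : M) * φ (u j)) := by
  have hIci : ({j | ¬j < i} : Finset (Fin t)) = Ici i := by ext; simp
  rw [potential, ← sum_filter_add_sum_filter_not univ (· < i), filter_gt_eq_Iio, hIci,
    ← add_sum_Ioi_eq_sum_Ici]

lemma potential_eq_of_linking {G : SimpleGraph V} {t : ℕ} (φ : V → M) {u v : Fin t → V}
    (h : linking G t u v) : potential φ u = potential φ v := by
  obtain ⟨-, i, -, hi, hinit, -, htail⟩ := h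
  have tail : ∀ (w : Fin t → V) (c : V), (∀ j, i < j → w j = c) →
      ∑ j ∈ Ioi i, (tailWeight j.rev : M) * φ (w j) = (tailWeight i.rev : M) * φ c := by
    intro w c hw
    rw [sum_congr rfl fun j hj => by rw [hw j (mem_Ioi.mp hj)], ← sum_mul, ← Nat.cast_sum,
      sum_Ioi_tailWeight_rev hi]
  rw [potential_eq_sum_Iio_add φ u i, potential_eq_sum_Iio_add φ v i,
    tail u (v i) fun j hj => (htail j hj).1, tail v (u i) fun j hj => (htail j hj).2,
    sum_congr rfl fun j hj => by rw [hinit j (mem_Iio.mp hj)]]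
  ring

lemma potential_sub_potential_of_forall_ne {t : ℕ} (φ : V → M) {u v : Fin t → V} {i : Fin t}
    (hi : i.val + 1 = t) (h : ∀ j ≠ i, u j = v j) :
    potential φ u - potential φ v = φ (u i) - φ (v i) := by
  have hrev : (i.rev : ℕ) = 0 := by rw [Fin.val_rev]; omega
  rw [potential, potential, ← sum_sub_distrib, Fintype.sum_eq_single i fun j hj => by
    rw [h j hj, sub_self], hrev, tailWeight, Nat.cast_one, one_mul, one_mul]

def gasketPotential (G : SimpleGraph V) (t : ℕ) (φ : V → M) :
    Quotient (gasketSetoid G t) → M :=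
  Quotient.lift (potential φ) fun _ _ h =>
    Setoid.eqvGen_le (s := Setoid.ker (potential φ)) (fun _ _ => potential_eq_of_linking φ) h

lemma eq_of_mk_eq_of_forall_ne {G : SimpleGraph V} {t : ℕ} {u v : Fin t → V} {i : Fin t}
    (hi : i.val + 1 = t) (h : ∀ j ≠ i, u j = v j)
    (huv : Quotient.mk (gasketSetoid G t) u = Quotient.mk _ v) : u i = v i := by
  classical
  let φ : V → ℤ := fun a => if a = u i then 1 else 0
  have hpot : potential φ u = potential φ v := congrArg (gasketPotential G t φ) huv
  have := potential_sub_potential_of_forall_ne φ hi h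
  by_contra hne
  simp [φ, hpot, Ne.symm hne] at this

lemma exists_last_letter_edge_of_gasket_adj {G : SimpleGraph V} {t : ℕ}
    {x y : Quotient (gasketSetoid G t)} (hxy : (gasket G t).Adj x y) :
    ∃ (u v : Fin t → V) (i : Fin t), Quotient.mk _ u = x ∧ Quotient.mk _ v = y ∧
      i.val + 1 = t ∧ (∀ j ≠ i, u j = v j) ∧ G.Adj (u i) (v i) := by
  obtain ⟨hne, u, v, rfl, rfl, i, hinit, hadj, htail⟩ := hxy
  have hi : i.val + 1 = t := by
    by_contra hi
    exact hne (Quotient.sound (Relation.EqvGen.rel _ _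
      ⟨i, i, rfl, by omega, hinit, hadj, htail⟩))
  refine ⟨u, v, i, rfl, rfl, hi, fun j hj => hinit j ?_, hadj⟩
  exact lt_of_le_of_ne (Fin.le_def.mpr (by omega)) hj

lemma gasket_colorable_succ {G : SimpleGraph V} {n : ℕ} (h : G.Colorable n) (t : ℕ) :
    (gasket G t).Colorable (n + 1) := by
  let c : G.Coloring (ZMod (n + 1)) := h.toColoring (by simp)
  suffices (gasket G t).Coloring (ZMod (n + 1)) by simpa using this.colorable
  refine Coloring.mk (gasketPotential G t c) fun hxy heq => ?_
  obtain ⟨u, v, i, rfl, rfl, hi, hagree, hadj⟩ := exists_last_letter_edge_of_gasket_adj hxy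
  have hpot : potential c u = potential c v := heq
  have hsub := potential_sub_potential_of_forall_ne c hi hagree
  rw [hpot, sub_self, eq_comm, sub_eq_zero] at hsub
  exact c.valid hadj hsub

def gasketHom (G : SimpleGraph V) (x : V) (s : ℕ) : G →g gasket G (s + 1) where
  toFun a := Quotient.mk _ (Function.update (fun _ => x) (Fin.last s) a)
  map_rel' {a b} hab := by
    have hagree : ∀ j ≠ Fin.last s, Function.update (fun _ => x) (Fin.last s) a j =
        Function.update (fun _ => x) (Fin.last s) b j := fun j hj => by
      simp [Function.update_of_ne hj]
    refine ⟨fun heq => hab.ne ?_, _, _, rfl, rfl, Fin.last s, fun j hj => hagree j hj.ne,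
      by simpa using hab, fun j hj => absurd hj (Fin.le_last j).not_gt⟩
    simpa using eq_of_mk_eq_of_forall_ne (by simp) hagree heq

/-- `χ(G) ≤ χ(S[G,t]) ≤ χ(G) + 1` for every graph `G` and every `t ≥ 1`. -/
theorem stmt_16 (G : SimpleGraph V) (t : ℕ) (ht : 1 ≤ t) :
    G.chromaticNumber ≤ (gasket G t).chromaticNumber ∧
    (gasket G t).chromaticNumber ≤ G.chromaticNumber + 1 := by
  refine ⟨?_, ?_⟩
  · obtain ⟨s, rfl⟩ : ∃ s, t = s + 1 := ⟨t - 1, by omega⟩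
    rcases isEmpty_or_nonempty V with hV | ⟨⟨x⟩⟩
    · simp [chromaticNumber_eq_zero_of_isEmpty]
    · exact chromaticNumber_mono_of_hom (gasketHom G x s)
  · cases hχ : G.chromaticNumber using ENat.recTopCoe with
    | top => simp
    | coe n =>
      have hG : G.Colorable n := chromaticNumber_le_iff_colorable.mp hχ.le
      exact_mod_cast (gasket_colorable_succ hG t).chromaticNumber_le
end
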